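/- arXiv:2303.15079 — 2 statements merged into one kernel-verified Lean document; each statement's English description precedes it below -/
import Mathlib

section
/- Let η, μ : (0,∞) → R be positive functions satisfying (rη')' = ((r² + (n/2−1)²)/r) η and (rμ')' = ((r² + (n/2)²)/r) μ, with r(ημ' − μη') → 0 as r → 0⁺. Then for every r > 0, μ'(r)/μ(r) − η'(r)/η(r) = (n−1)/(r η(r) μ(r)) · ∫₀^r η(s)μ(s)/s ds > 0; in particular the ratio η(r)/μ(r) is strictly decreasing on (0,∞). -/
open MeasureTheory Filter Set Topology Function

/-!
The two equations give the Lagrange identity `(r (η μ' - μ η'))' = ((n/2)² - (n/2 - 1)²) η μ / r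
= (n - 1) η μ / r`. Since `r (η μ' - μ η')` vanishes at `0⁺`, integrating yields
`r (η μ' - μ η') = (n - 1) ∫₀^r η μ / s ds > 0`; dividing by `r η μ` gives the formula for
`μ'/μ - η'/η`, whose positivity makes `(η/μ)' = (η'/η - μ'/μ) η/μ` negative.
-/

/-- The Wronskian adapted to the operator `u ↦ (r u')'`. -/
noncomputable def radialWronskian (f g : ℝ → ℝ) (r : ℝ) : ℝ :=
  r * (f r * deriv g r - g r * deriv f r)

theorem hasDerivAt_radialWronskian {f g : ℝ → ℝ} {x a b : ℝ}
    (hf : DifferentiableAt ℝ f x) (hg : DifferentiableAt ℝ g x)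
    (hf' : HasDerivAt (fun s => s * deriv f s) a x)
    (hg' : HasDerivAt (fun s => s * deriv g s) b x) :
    HasDerivAt (radialWronskian f g) (f x * b - g x * a) x := by
  have hW : radialWronskian f g = (f * fun s => s * deriv g s) - g * fun s => s * deriv f s := by
    funext s
    simp only [radialWronskian, Pi.sub_apply, Pi.mul_apply]
    ring
  rw [hW]
  exact ((hf.hasDerivAt.mul hg').sub (hg.hasDerivAt.mul hf')).congr_deriv (by ring)

theorem hasDerivAt_radialWronskian_of_modBessel {f g : ℝ → ℝ} {x α β : ℝ} (hx : x ≠ 0)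
    (hf : DifferentiableAt ℝ f x) (hg : DifferentiableAt ℝ g x)
    (hf' : HasDerivAt (fun s => s * deriv f s) ((x ^ 2 + α ^ 2) / x * f x) x)
    (hg' : HasDerivAt (fun s => s * deriv g s) ((x ^ 2 + β ^ 2) / x * g x) x) :
    HasDerivAt (radialWronskian f g) ((β ^ 2 - α ^ 2) * (f x * g x / x)) x :=
  (hasDerivAt_radialWronskian hf hg hf' hg').congr_deriv (by field_simp; ring)

theorem integral_Ioc_eq_sub_of_hasDerivAt_of_tendsto {f f' : ℝ → ℝ} {a b m : ℝ} (hab : a < b)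
    (hderiv : ∀ x ∈ Ioc a b, HasDerivAt f (f' x) x) (hint : IntegrableOn f' (Ioc a b))
    (hlim : Tendsto f (𝓝[>] a) (𝓝 m)) :
    ∫ x in Ioc a b, f' x = f b - m := by
  classical
  have hupdate : ∀ x, a < x → update f a m =ᶠ[𝓝 x] f := fun x hax =>
    (eventually_ne_nhds hax.ne').mono fun y hy => update_of_ne hy _ _
  have hcont : ContinuousOn (update f a m) (Icc a b) := by
    intro x hx
    rcases hx.1.eq_or_lt with rfl | hax
    · rw [continuousWithinAt_update_same]
      exact hlim.mono_left (nhdsWithin_mono _ fun y hy => hy.1.1.lt_of_ne' hy.2)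
    · exact ((hderiv x ⟨hax, hx.2⟩).continuousAt.congr_of_eventuallyEq
        (hupdate x hax)).continuousWithinAt
  have hftc := intervalIntegral.integral_eq_sub_of_hasDerivAt_of_le hab.le hcont
    (fun x hx => (hderiv x (Ioo_subset_Ioc_self hx)).congr_of_eventuallyEq (hupdate x hx.1))
    ((intervalIntegrable_iff_integrableOn_Ioc_of_le hab.le).2 hint)
  rwa [intervalIntegral.integral_of_le hab.le, update_of_ne hab.ne', update_self] at hftc

theorem integral_Ioc_pos_of_pos {f : ℝ → ℝ} {a b : ℝ} (hab : a < b)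
    (hint : IntegrableOn f (Ioc a b)) (hpos : ∀ x ∈ Ioc a b, 0 < f x) :
    0 < ∫ x in Ioc a b, f x := by
  rw [← intervalIntegral.integral_of_le hab.le]
  exact intervalIntegral.intervalIntegral_pos_of_pos_on
    ((intervalIntegrable_iff_integrableOn_Ioc_of_le hab.le).2 hint)
    (fun x hx => hpos x (Ioo_subset_Ioc_self hx)) hab

theorem strictAntiOn_div_of_logDeriv_lt {f g : ℝ → ℝ} {s : Set ℝ} (hs : IsOpen s)
    (hs' : Convex ℝ s) (hf : ∀ x ∈ s, DifferentiableAt ℝ f x)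
    (hg : ∀ x ∈ s, DifferentiableAt ℝ g x) (hfpos : ∀ x ∈ s, 0 < f x)
    (hgpos : ∀ x ∈ s, 0 < g x) (hlt : ∀ x ∈ s, logDeriv f x < logDeriv g x) :
    StrictAntiOn (fun x => f x / g x) s := by
  refine strictAntiOn_of_deriv_neg hs' (fun x hx =>
    ((hf x hx).div (hg x hx) (hgpos x hx).ne').continuousAt.continuousWithinAt) fun x hx => ?_
  rw [hs.interior_eq] at hx
  have hfx := hfpos x hx
  have hgx := hgpos x hx
  have hcross : deriv f x * g x < deriv g x * f x := by
    simpa only [logDeriv_apply, div_lt_div_iff₀ hfx hgx] using hlt x hx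
  rw [deriv_fun_div (hf x hx) (hg x hx) hgx.ne']
  exact div_neg_of_neg_of_pos (by linarith) (by positivity)

/-- Wronskian-type monotonicity: if `η, μ > 0` satisfy
`(rη')' = ((r² + (n/2−1)²)/r) η` and `(rμ')' = ((r² + (n/2)²)/r) μ` with
`r(ημ' − μη') → 0` as `r → 0⁺`, then
`μ'/μ − η'/η = (n−1)/(rημ) ∫₀^r ημ/s ds > 0`, and `η/μ` is strictly decreasing on `(0,∞)`. -/
theorem wronskian_monotonicity (n : ℕ) (hn : 2 ≤ n) (η μ : ℝ → ℝ)
    (hηpos : ∀ r > (0:ℝ), 0 < η r) (hμpos : ∀ r > (0:ℝ), 0 < μ r)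
    (hη' : ∀ r > (0:ℝ), HasDerivAt η (deriv η r) r)
    (hμ' : ∀ r > (0:ℝ), HasDerivAt μ (deriv μ r) r)
    (hηSL : ∀ r > (0:ℝ), HasDerivAt (fun s : ℝ => s * deriv η s)
      ((r ^ 2 + ((n:ℝ)/2 - 1) ^ 2) / r * η r) r)
    (hμSL : ∀ r > (0:ℝ), HasDerivAt (fun s : ℝ => s * deriv μ s)
      ((r ^ 2 + ((n:ℝ)/2) ^ 2) / r * μ r) r)
    (hint : ∀ r > (0:ℝ), IntegrableOn (fun s => η s * μ s / s) (Set.Ioc 0 r))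
    (hlim : Filter.Tendsto (fun r => r * (η r * deriv μ r - μ r * deriv η r))
      (nhdsWithin 0 (Set.Ioi 0)) (nhds 0)) :
    (∀ r > (0:ℝ),
      deriv μ r / μ r - deriv η r / η r =
        ((n:ℝ) - 1) / (r * η r * μ r) * ∫ s in Set.Ioc (0:ℝ) r, η s * μ s / s ∧
      0 < deriv μ r / μ r - deriv η r / η r) ∧
    StrictAntiOn (fun r => η r / μ r) (Set.Ioi 0) := by
  have hn1 : (0:ℝ) < n - 1 := by
    have : (2:ℝ) ≤ n := by exact_mod_cast hn
    linarith
  have hW' : ∀ x > (0:ℝ), HasDerivAt (radialWronskian η μ) ((n - 1) * (η x * μ x / x)) x :=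
    fun x hx => (hasDerivAt_radialWronskian_of_modBessel hx.ne' (hη' x hx).differentiableAt
      (hμ' x hx).differentiableAt (hηSL x hx) (hμSL x hx)).congr_deriv (by ring)
  have hW : ∀ r > (0:ℝ), radialWronskian η μ r = (n - 1) * ∫ s in Ioc 0 r, η s * μ s / s := by
    intro r hr
    rw [← integral_const_mul, integral_Ioc_eq_sub_of_hasDerivAt_of_tendsto hr
      (fun x hx => hW' x hx.1) ((hint r hr).const_mul _) hlim, sub_zero]
  have hI : ∀ r > (0:ℝ), 0 < ∫ s in Ioc 0 r, η s * μ s / s := fun r hr =>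
    integral_Ioc_pos_of_pos hr (hint r hr) fun s hs =>
      div_pos (mul_pos (hηpos s hs.1) (hμpos s hs.1)) hs.1
  have hlog : ∀ r > (0:ℝ), deriv μ r / μ r - deriv η r / η r =
      ((n:ℝ) - 1) / (r * η r * μ r) * ∫ s in Ioc 0 r, η s * μ s / s := by
    intro r hr
    rw [div_mul_eq_mul_div, ← hW r hr, radialWronskian]
    field_simp [(hηpos r hr).ne', (hμpos r hr).ne']
  have hpos : ∀ r > (0:ℝ), 0 < deriv μ r / μ r - deriv η r / η r := fun r hr => by
    rw [hlog r hr]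
    exact mul_pos (div_pos hn1 (mul_pos (mul_pos hr (hηpos r hr)) (hμpos r hr))) (hI r hr)
  refine ⟨fun r hr => ⟨hlog r hr, hpos r hr⟩, ?_⟩
  exact strictAntiOn_div_of_logDeriv_lt isOpen_Ioi (convex_Ioi 0)
    (fun x hx => (hη' x hx).differentiableAt) (fun x hx => (hμ' x hx).differentiableAt)
    hηpos hμpos fun x hx => by simpa only [logDeriv_apply, sub_pos] using hpos x hx
end

section
/- Let n ≥ 2, η, μ : (0,∞) → R be positive functions satisfying η'(r) = (n/2−1)η(r)/r + μ(r) and μ'(r) = −(n/2)μ(r)/r + η(r), and define ζ(r) = 2r²μ(r)² + 2(n−1)r η(r)μ(r) + (n+1−2r²) η(r)². Then r ζ'(r) = ζ(r) + 4r η(r)μ(r) + (n²−2n−3) η(r)² for all r > 0. -/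
noncomputable def zeta (n : ℝ) (η μ : ℝ → ℝ) (r : ℝ) : ℝ :=
  2 * r ^ 2 * μ r ^ 2 + 2 * (n - 1) * r * η r * μ r + (n + 1 - 2 * r ^ 2) * η r ^ 2

theorem hasDerivAt_zeta {n : ℝ} {η μ : ℝ → ℝ} {r a b : ℝ}
    (hη : HasDerivAt η a r) (hμ : HasDerivAt μ b r) :
    HasDerivAt (zeta n η μ)
      (4 * r * μ r ^ 2 + 4 * r ^ 2 * μ r * b
        + 2 * (n - 1) * (η r * μ r + r * a * μ r + r * η r * b)
        - 4 * r * η r ^ 2 + 2 * (n + 1 - 2 * r ^ 2) * η r * a) r := by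
  have hr2 : HasDerivAt (fun r : ℝ => r ^ 2) (2 * r) r := by
    simpa using hasDerivAt_pow 2 r
  refine HasDerivAt.congr_deriv ((((hr2.const_mul 2).mul (hμ.pow 2)).add
      ((((hasDerivAt_id' r).const_mul (2 * (n - 1))).mul hη).mul hμ)).add
      (((hasDerivAt_const r (n + 1)).sub (hr2.const_mul 2)).mul (hη.pow 2))) ?_
  simp only [Pi.pow_apply, Pi.mul_apply, Pi.sub_apply]
  ring

theorem zeta_differential_identity_general (n : ℕ) (η μ ζ : ℝ → ℝ)
    (hη' : ∀ r > (0:ℝ), HasDerivAt η (((n:ℝ)/2 - 1) * η r / r + μ r) r)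
    (hμ' : ∀ r > (0:ℝ), HasDerivAt μ (-((n:ℝ)/2) * μ r / r + η r) r)
    (hζ : ∀ r : ℝ, ζ r = 2 * r ^ 2 * μ r ^ 2 + 2 * ((n:ℝ) - 1) * r * η r * μ r +
      ((n:ℝ) + 1 - 2 * r ^ 2) * η r ^ 2) :
    ∀ r > (0:ℝ),
      r * deriv ζ r = ζ r + 4 * r * η r * μ r + ((n:ℝ) ^ 2 - 2 * n - 3) * η r ^ 2 := by
  intro r hr
  have hζ_eq : ζ = zeta n η μ := funext hζ
  rw [hζ_eq, (hasDerivAt_zeta (hη' r hr) (hμ' r hr)).deriv, zeta]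
  field_simp
  ring

/-- Key differential identity of Lemma 3.4: if `η, μ > 0` satisfy
`η' = (n/2−1)η/r + μ` and `μ' = −(n/2)μ/r + η` on `(0,∞)`, and
`ζ(r) = 2r²μ(r)² + 2(n−1)r η(r)μ(r) + (n+1−2r²) η(r)²`, then
`r ζ'(r) = ζ(r) + 4r η(r)μ(r) + (n²−2n−3) η(r)²` for all `r > 0`. -/
theorem zeta_differential_identity (n : ℕ) (hn : 2 ≤ n) (η μ ζ : ℝ → ℝ)
    (hηpos : ∀ r > (0:ℝ), 0 < η r) (hμpos : ∀ r > (0:ℝ), 0 < μ r)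
    (hη' : ∀ r > (0:ℝ), HasDerivAt η (((n:ℝ)/2 - 1) * η r / r + μ r) r)
    (hμ' : ∀ r > (0:ℝ), HasDerivAt μ (-((n:ℝ)/2) * μ r / r + η r) r)
    (hζ : ∀ r : ℝ, ζ r = 2 * r ^ 2 * μ r ^ 2 + 2 * ((n:ℝ) - 1) * r * η r * μ r +
      ((n:ℝ) + 1 - 2 * r ^ 2) * η r ^ 2) :
    ∀ r > (0:ℝ),
      r * deriv ζ r = ζ r + 4 * r * η r * μ r + ((n:ℝ) ^ 2 - 2 * n - 3) * η r ^ 2 :=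
  zeta_differential_identity_general n η μ ζ hη' hμ' hζ
end
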